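/- For any continued fraction with positive integer partial quotients and all relevant denominators odd, the pattern 1, -1, -1, 1 cannot occur as four consecutive values (s_k/t_k), (s_{k+1}/t_{k+1}), (s_{k+2}/t_{k+2}), (s_{k+3}/t_{k+3}) of Jacobi symbols of convergents. -/

import Mathlib

/-!
The determinant identity `s_{k+1} t_k - s_k t_{k+1} = (-1)^k` makes `s_{k+1} t_k` congruent to
`(-1)^k` modulo `t_{k+1}` and `s_k t_{k+1}` congruent to `-(-1)^k` modulo `t_k`. Together with
quadratic reciprocity for `t_k, t_{k+1}` this gives the criterion for a sign change between
`(s_k/t_k)` and `(s_{k+1}/t_{k+1})` in terms of `k mod 2` and `t_k, t_{k+1} mod 4`.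
The pattern `1, -1, -1, 1` asks for sign changes at `k` and `k + 2` but not at `k + 1`; the
residues of `t_{k+1}, t_{k+2}` forced by the two changes produce the third one as well.
-/

/-- Numerators of continued fraction convergents: `cfS a k = s_k`
(with `s_{-1} = 1`, `s_0 = a_0`, `s_k = a_k s_{k-1} + s_{k-2}`). -/
def cfS (a : ℕ → ℤ) : ℕ → ℤ
  | 0 => a 0
  | 1 => a 1 * a 0 + 1
  | (k+2) => a (k+2) * cfS a (k+1) + cfS a k

/-- Denominators of continued fraction convergents: `cfT a k = t_k`
(with `t_{-1} = 0`, `t_0 = 1`, `t_k = a_k t_{k-1} + t_{k-2}`). -/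
def cfT (a : ℕ → ℤ) : ℕ → ℤ
  | 0 => 1
  | 1 => a 1
  | (k+2) => a (k+2) * cfT a (k+1) + cfT a k

open ZMod

theorem jacobiSym_mul_jacobiSym_of_mul_sub_mul_eq_neg_one_pow {m n k : ℕ} {s s' : ℤ}
    (hm : Odd m) (hn : Odd n) (hdet : s' * m - s * n = (-1) ^ k) :
    jacobiSym s' n * jacobiSym s m =
      (-1) ^ (k * (n / 2) + (k + 1) * (m / 2) + m / 2 * (n / 2)) := by
  have hsq : ((-1 : ℤ) ^ k) ^ 2 = 1 := by rw [← pow_mul, pow_mul', neg_one_sq, one_pow]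
  have hcop : IsCoprime (m : ℤ) n :=
    ⟨(-1) ^ k * s', -((-1) ^ k * s), by linear_combination (-1) ^ k * hdet + hsq⟩
  have hmn : jacobiSym s' n * jacobiSym m n = (-1) ^ (k * (n / 2)) := by
    have hmod : s' * m ≡ (-1) ^ k [ZMOD n] :=
      Int.modEq_iff_dvd.mpr ⟨-s, by linear_combination -hdet⟩
    rw [← jacobiSym.mul_left, jacobiSym.mod_left' hmod, jacobiSym.pow_left,
      jacobiSym.at_neg_one hn, χ₄_eq_neg_one_pow (Nat.odd_iff.mp hn), ← pow_mul, mul_comm]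
  have hnm : jacobiSym s m * jacobiSym n m = (-1) ^ ((k + 1) * (m / 2)) := by
    have hmod : s * n ≡ (-1) ^ (k + 1) [ZMOD m] :=
      Int.modEq_iff_dvd.mpr ⟨-s', by linear_combination hdet⟩
    rw [← jacobiSym.mul_left, jacobiSym.mod_left' hmod, jacobiSym.pow_left,
      jacobiSym.at_neg_one hm, χ₄_eq_neg_one_pow (Nat.odd_iff.mp hm), ← pow_mul, mul_comm]
  have hmm := jacobiSym.sq_one (Int.isCoprime_iff_gcd_eq_one.mp hcop)
  have hnn := jacobiSym.sq_one (Int.isCoprime_iff_gcd_eq_one.mp hcop.symm)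
  have hrec : jacobiSym m n * jacobiSym n m = (-1) ^ (m / 2 * (n / 2)) := by
    rw [jacobiSym.quadratic_reciprocity hm hn, mul_assoc, ← sq, hnn, mul_one]
  calc jacobiSym s' n * jacobiSym s m
      = (jacobiSym s' n * jacobiSym m n) * (jacobiSym s m * jacobiSym n m) *
          (jacobiSym m n * jacobiSym n m) := by
        linear_combination (-(jacobiSym s' n * jacobiSym s m) * jacobiSym n m ^ 2) * hmm -
          jacobiSym s' n * jacobiSym s m * hnn
    _ = _ := by rw [hmn, hnm, hrec, pow_add, pow_add]

theorem jacobiSym_mul_jacobiSym_eq_neg_one_iff {m n k : ℕ} {s s' : ℤ}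
    (hm : Odd m) (hn : Odd n) (hdet : s' * m - s * n = (-1) ^ k) :
    jacobiSym s' n * jacobiSym s m = -1 ↔
      m % 4 = 1 ∧ n % 4 = 3 ∧ Odd k ∨ m % 4 = 3 ∧ n % 4 = 1 ∧ Even k := by
  rw [jacobiSym_mul_jacobiSym_of_mul_sub_mul_eq_neg_one_pow hm hn hdet,
    neg_one_pow_eq_neg_one_iff_odd (by decide)]
  simp only [parity_simps, Nat.odd_mul]
  simp only [Nat.odd_iff, Nat.even_iff] at hm hn ⊢
  omega

theorem cfT_pos (a : ℕ → ℤ) (ha : ∀ i, 1 ≤ i → 0 < a i) : ∀ k, 0 < cfT a k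
  | 0 => Int.one_pos
  | 1 => ha 1 le_rfl
  | k + 2 => by
      have := cfT_pos a ha k
      have := cfT_pos a ha (k + 1)
      have := ha (k + 2) (by omega)
      change 0 < a (k + 2) * cfT a (k + 1) + cfT a k
      positivity

theorem cfS_succ_mul_cfT_sub_cfS_mul_cfT_succ (a : ℕ → ℤ) :
    ∀ k, cfS a (k + 1) * cfT a k - cfS a k * cfT a (k + 1) = (-1) ^ k
  | 0 => by simp only [cfS, cfT]; ring
  | k + 1 => by
      change (a (k + 2) * cfS a (k + 1) + cfS a k) * cfT a (k + 1)
          - cfS a (k + 1) * (a (k + 2) * cfT a (k + 1) + cfT a k) = (-1) ^ (k + 1)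
      linear_combination (-1 : ℤ) * cfS_succ_mul_cfT_sub_cfS_mul_cfT_succ a k

theorem jacobiSym_cfS_succ_mul_jacobiSym_cfS_eq_neg_one_iff (a : ℕ → ℤ)
    (ha : ∀ i, 1 ≤ i → 0 < a i) (k : ℕ) (hk : Odd (cfT a k)) (hk' : Odd (cfT a (k + 1))) :
    jacobiSym (cfS a (k + 1)) (cfT a (k + 1)).natAbs * jacobiSym (cfS a k) (cfT a k).natAbs = -1 ↔
      (cfT a k).natAbs % 4 = 1 ∧ (cfT a (k + 1)).natAbs % 4 = 3 ∧ Odd k ∨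
        (cfT a k).natAbs % 4 = 3 ∧ (cfT a (k + 1)).natAbs % 4 = 1 ∧ Even k := by
  refine jacobiSym_mul_jacobiSym_eq_neg_one_iff (Int.natAbs_odd.mpr hk) (Int.natAbs_odd.mpr hk') ?_
  rw [Int.natAbs_of_nonneg (cfT_pos a ha k).le, Int.natAbs_of_nonneg (cfT_pos a ha (k + 1)).le]
  exact cfS_succ_mul_cfT_sub_cfS_mul_cfT_succ a k

theorem no_pattern_one_neg_one_neg_one_one
    (a : ℕ → ℤ) (ha : ∀ i, 1 ≤ i → 0 < a i) :
    ¬ ∃ k : ℕ,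
      Odd (cfT a k) ∧ Odd (cfT a (k+1)) ∧ Odd (cfT a (k+2)) ∧ Odd (cfT a (k+3)) ∧
      jacobiSym (cfS a k) (cfT a k).natAbs = 1 ∧
      jacobiSym (cfS a (k+1)) (cfT a (k+1)).natAbs = -1 ∧
      jacobiSym (cfS a (k+2)) (cfT a (k+2)).natAbs = -1 ∧
      jacobiSym (cfS a (k+3)) (cfT a (k+3)).natAbs = 1 := by
  rintro ⟨k, h0, h1, h2, h3, j0, j1, j2, j3⟩
  have change0 := (jacobiSym_cfS_succ_mul_jacobiSym_cfS_eq_neg_one_iff a ha k h0 h1).mp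
    (by rw [j0, j1]; norm_num)
  have stay1 := (jacobiSym_cfS_succ_mul_jacobiSym_cfS_eq_neg_one_iff a ha (k + 1) h1 h2).not.mp
    (by rw [j1, j2]; norm_num)
  have change2 := (jacobiSym_cfS_succ_mul_jacobiSym_cfS_eq_neg_one_iff a ha (k + 2) h2 h3).mp
    (by rw [j2, j3]; norm_num)
  simp only [Nat.odd_iff, Nat.even_iff, add_assoc, Nat.reduceAdd] at change0 stay1 change2
  omega
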